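/- Let G be a gyrogroup and H a subgyrogroup. The relation a ∼_H b, defined by (⊖a ⊕ b ∈ H and gyr[⊖a, b](H) = H), is an equivalence relation on G. -/

import Mathlib

/-- A gyrogroup: a magma with a left identity, left inverses, and
gyroautomorphisms satisfying the left gyroassociative law and the
left loop property. -/
class Gyrogroup (G : Type*) where
  add : G → G → G
  zero : G
  neg : G → G
  gyr : G → G → G → G
  zero_add : ∀ a : G, add zero a = a
  neg_add : ∀ a : G, add (neg a) a = zero
  gyr_add : ∀ a b c d : G, gyr a b (add c d) = add (gyr a b c) (gyr a b d)
  gyr_bijective : ∀ a b : G, Function.Bijective (gyr a b)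
  left_gyroassoc : ∀ a b c : G, add a (add b c) = add (add a b) (gyr a b c)
  left_loop : ∀ a b : G, gyr a b = gyr (add a b) b

open Gyrogroup

/-!
Reflexivity holds because `gyr[⊖a, a]` is the identity, and symmetry because `gyr[⊖b, a]` inverts
`gyr[⊖a, b]` and carries `⊖(⊖a ⊕ b)` to `⊖b ⊕ a`. For transitivity, put `p = ⊖a ⊕ b` and
`q = gyr[⊖a, b](⊖b ⊕ c)`, both in `H`. Then `⊖a ⊕ c = p ⊕ q`, and the composition law of gyrations
factors `gyr[⊖a, c]` as `gyr[p, q] ∘ gyr[⊖a, b] ∘ gyr[⊖b, c]`. The outer factor fixes `H` because a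
gyration `gyr[p, q]` with `p, q ∈ H` is a composite of left translations by elements of `H`.
-/

namespace Gyrogroup

variable {G : Type*} [Gyrogroup G]

theorem add_right_injective (a : G) : Function.Injective (add a) := by
  intro x y h
  have neg_add_add (z : G) : add (neg a) (add a z) = gyr (neg a) a z := by
    rw [left_gyroassoc, Gyrogroup.neg_add, Gyrogroup.zero_add]
  have h' := congrArg (add (neg a)) h
  rw [neg_add_add, neg_add_add] at h'
  exact (gyr_bijective (neg a) a).1 h'

theorem gyr_zero_left (b x : G) : gyr zero b x = x :=
  add_right_injective b <| by
    simpa only [Gyrogroup.zero_add] using (left_gyroassoc zero b x).symm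

theorem gyr_neg_self (a x : G) : gyr (neg a) a x = x := by
  rw [left_loop, Gyrogroup.neg_add, gyr_zero_left]

theorem neg_add_cancel_left (a x : G) : add (neg a) (add a x) = x := by
  rw [left_gyroassoc, Gyrogroup.neg_add, Gyrogroup.zero_add, gyr_neg_self]

theorem add_neg_cancel_left (a x : G) : add a (add (neg a) x) = x :=
  add_right_injective (neg a) (neg_add_cancel_left a _)

theorem add_zero (a : G) : add a zero = a := by
  simpa only [Gyrogroup.neg_add] using add_neg_cancel_left a a

theorem eq_neg_of_add_eq_zero {a x : G} (h : add a x = zero) : x = neg a := by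
  simpa only [neg_add_cancel_left, add_zero] using congrArg (add (neg a)) h

theorem neg_neg (a : G) : neg (neg a) = a :=
  (eq_neg_of_add_eq_zero (Gyrogroup.neg_add a)).symm

theorem add_neg (a : G) : add a (neg a) = zero := by
  simpa only [neg_neg] using Gyrogroup.neg_add (neg a)

theorem gyr_self_neg (a x : G) : gyr a (neg a) x = x := by
  rw [left_loop, add_neg, gyr_zero_left]

theorem gyr_eq_neg_add_add_add (a b x : G) :
    gyr a b x = add (neg (add a b)) (add a (add b x)) := by
  rw [left_gyroassoc a b x, neg_add_cancel_left]

theorem gyr_apply_add_neg_neg (a b : G) :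
    gyr a b (add (neg b) (neg a)) = neg (add a b) :=
  eq_neg_of_add_eq_zero <| by
    rw [← left_gyroassoc, add_neg_cancel_left, add_neg]

theorem gyr_neg_add_gyr (a b x : G) : gyr (neg a) (add a b) (gyr a b x) = x := by
  apply add_right_injective b
  have h := left_gyroassoc (neg a) (add a b) (gyr a b x)
  rwa [← left_gyroassoc a b x, neg_add_cancel_left, neg_add_cancel_left, eq_comm] at h

theorem gyr_add_gyr (a b c x : G) :
    gyr a (add b c) (gyr b c x) = gyr (add a b) (gyr a b c) (gyr a b x) := by
  apply add_right_injective (add a (add b c))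
  calc add (add a (add b c)) (gyr a (add b c) (gyr b c x))
      = add a (add b (add c x)) := by rw [← left_gyroassoc, ← left_gyroassoc]
    _ = add (add a b) (add (gyr a b c) (gyr a b x)) := by rw [left_gyroassoc, gyr_add]
    _ = add (add a (add b c)) (gyr (add a b) (gyr a b c) (gyr a b x)) := by
        rw [left_gyroassoc (add a b), ← left_gyroassoc a b c]

theorem gyr_neg_add_right (b c x : G) : gyr b (add (neg b) c) x = gyr (neg c) b x := by
  have h := gyr_add_gyr (neg c) b (add (neg b) c) x
  have hc : gyr (neg c) b (add (neg b) c) = neg (add (neg c) b) := by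
    simpa only [neg_neg] using gyr_apply_add_neg_neg (neg c) b
  rwa [add_neg_cancel_left, gyr_neg_self, hc, gyr_self_neg] at h

theorem gyr_neg_leftInverse (a b : G) :
    Function.LeftInverse (gyr (neg b) a) (gyr (neg a) b) := fun x => by
  simpa only [neg_neg, gyr_neg_add_right] using gyr_neg_add_gyr (neg a) b x

theorem gyr_neg_apply_neg_neg_add (a b : G) :
    gyr (neg b) a (neg (add (neg a) b)) = add (neg b) a := by
  have h := gyr_apply_add_neg_neg (neg a) b
  rw [neg_neg] at h
  rw [← h, gyr_neg_leftInverse]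

theorem add_eq_add_add_gyr (a b c : G) :
    add a c = add (add a b) (gyr a b (add (neg b) c)) := by
  rw [← left_gyroassoc, add_neg_cancel_left]

theorem gyr_eq_gyr_add_comp (a b c : G) :
    gyr a c = gyr (add a b) (gyr a b (add (neg b) c)) ∘ gyr a b ∘ gyr (neg b) c := by
  funext x
  have h := gyr_add_gyr a b (add (neg b) c) (gyr (neg b) c x)
  rwa [add_neg_cancel_left, gyr_neg_add_right, gyr_neg_leftInverse] at h

section Subgyrogroup

variable {H : Set G} (hadd : ∀ a ∈ H, ∀ b ∈ H, add a b ∈ H) (hneg : ∀ a ∈ H, neg a ∈ H)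
include hadd hneg

theorem zero_mem (hne : H.Nonempty) : (zero : G) ∈ H := by
  obtain ⟨x, hx⟩ := hne
  simpa only [Gyrogroup.neg_add] using hadd _ (hneg x hx) _ hx

theorem image_gyr_subset {p q : G} (hp : p ∈ H) (hq : q ∈ H) : gyr p q '' H ⊆ H := by
  rintro _ ⟨x, hx, rfl⟩
  rw [gyr_eq_neg_add_add_add]
  exact hadd _ (hneg _ (hadd _ hp _ hq)) _ (hadd _ hp _ (hadd _ hq _ hx))

theorem image_gyr_eq {p q : G} (hp : p ∈ H) (hq : q ∈ H) : gyr p q '' H = H := by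
  refine (image_gyr_subset hadd hneg hp hq).antisymm fun y hy => ?_
  have hinv : gyr p q (gyr (neg q) (neg p) y) = y := by
    simpa only [neg_neg] using gyr_neg_leftInverse q (neg p) y
  exact ⟨_, image_gyr_subset hadd hneg (hneg q hq) (hneg p hp) ⟨y, hy, rfl⟩, hinv⟩

end Subgyrogroup

end Gyrogroup

/-- For a subgyrogroup H (a nonempty subset closed under ⊕ and inverses),
the relation a ∼_H b ↔ (⊖a ⊕ b ∈ H ∧ gyr[⊖a,b](H) = H) is an equivalence
relation on G. -/
theorem simH_equivalence {G : Type*} [Gyrogroup G] (H : Set G)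
    (hne : H.Nonempty)
    (hadd : ∀ a ∈ H, ∀ b ∈ H, add a b ∈ H)
    (hneg : ∀ a ∈ H, neg a ∈ H) :
    Equivalence (fun a b : G => add (neg a) b ∈ H ∧ gyr (neg a) b '' H = H) := by
  refine ⟨fun a => ⟨?_, ?_⟩, fun {a b} ⟨hab, hgab⟩ => ?_, fun {a b c} ⟨hab, hgab⟩ ⟨hbc, hgbc⟩ => ?_⟩
  · rw [Gyrogroup.neg_add]
    exact zero_mem hadd hneg hne
  · simp only [gyr_neg_self, Set.image_id']
  · have hgba : gyr (neg b) a '' H = H := by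
      conv_lhs => rw [← hgab]
      exact (gyr_neg_leftInverse a b).image_image H
    refine ⟨?_, hgba⟩
    rw [← gyr_neg_apply_neg_neg_add, ← hgba]
    exact Set.mem_image_of_mem _ (hneg _ hab)
  · have hq : gyr (neg a) b (add (neg b) c) ∈ H := hgab ▸ Set.mem_image_of_mem _ hbc
    refine ⟨add_eq_add_add_gyr (neg a) b c ▸ hadd _ hab _ hq, ?_⟩
    rw [gyr_eq_gyr_add_comp (neg a) b c, Set.image_comp, Set.image_comp, hgbc, hgab,
      image_gyr_eq hadd hneg hab hq]
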